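/- arXiv:1610.06208 — 2 statements merged into one kernel-verified Lean document; each statement's English description precedes it below -/
import Mathlib

section
/- Let A be a partially ordered ring in which products of commuting nonnegative elements are nonnegative, and let p, q be commuting idempotents with 0 ≤ p, q ≤ 1. Then p ≤ q if and only if p = pq. -/
/-- In a partially ordered ring where products of commuting nonnegative elements are
nonnegative, for commuting idempotents `p, q ∈ [0,1]`: `p ≤ q ↔ p = pq`. -/
theorem le_iff_eq_mul_of_commuting_idempotents
    {A : Type*} [Ring A] [PartialOrder A]
    [CovariantClass A A (· + ·) (· ≤ ·)]
    (hmul : ∀ a b : A, 0 ≤ a → 0 ≤ b → a * b = b * a → 0 ≤ a * b)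
    (p q : A) (hp0 : 0 ≤ p) (hp1 : p ≤ 1) (hq0 : 0 ≤ q) (hq1 : q ≤ 1)
    (hp : p * p = p) (hq : q * q = q) (hpq : p * q = q * p) :
    p ≤ q ↔ p = p * q := by
  constructor
  · intro hle
    have h1 : (0:A) ≤ p * (1 - q) := by
      refine hmul p (1 - q) hp0 (sub_nonneg.mpr hq1) ?_
      rw [mul_sub, sub_mul, mul_one, one_mul, hpq]
    have h2 : (0:A) ≤ (q - p) * (1 - q) := by
      refine hmul (q - p) (1 - q) (sub_nonneg.mpr hle) (sub_nonneg.mpr hq1) ?_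
      rw [sub_mul, mul_sub, mul_sub, mul_sub, sub_mul, sub_mul, mul_one, one_mul,
        mul_one, one_mul, hq, hpq]
    have e2 : (q - p) * (1 - q) = p * q - p := by
      rw [sub_mul, mul_sub, mul_sub, mul_one, mul_one, hq, hpq]
      abel
    have e1 : p * (1 - q) = p - p * q := by rw [mul_sub, mul_one]
    rw [e2] at h2
    rw [e1] at h1
    exact le_antisymm (sub_nonneg.mp h2) (sub_nonneg.mp h1)
  · intro heq
    have h : (0:A) ≤ (1 - p) * q := by
      refine hmul (1 - p) q (sub_nonneg.mpr hp1) hq0 ?_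
      rw [sub_mul, mul_sub, mul_one, one_mul, hpq]
    have e : (1 - p) * q = q - p := by
      rw [sub_mul, one_mul, ← heq]
    rw [e] at h
    exact sub_nonneg.mp h
end

section
/- Let A be a partially ordered ring in which products of commuting nonnegative elements are nonnegative, and let p, q be commuting idempotents with 0 ≤ p, q ≤ 1. Then pq is the infimum of p and q in the set P of idempotents of A lying in [0,1]: pq ≤ p, pq ≤ q, and any idempotent r ∈ P commuting with p and q with r ≤ p and r ≤ q satisfies r ≤ pq. -/
/-- In a partially ordered ring where products of commuting nonnegative elements are
nonnegative, for commuting idempotents `p, q ∈ [0,1]`, `pq` is the infimum of `p` and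
`q` among idempotents in `[0,1]`: `pq ≤ p`, `pq ≤ q`, and any idempotent
`r ∈ [0,1]` commuting with `p` and `q` with `r ≤ p`, `r ≤ q` satisfies `r ≤ pq`. -/
theorem mul_is_inf_of_commuting_idempotents
    {A : Type*} [Ring A] [PartialOrder A]
    [CovariantClass A A (· + ·) (· ≤ ·)]
    (hmul : ∀ a b : A, 0 ≤ a → 0 ≤ b → a * b = b * a → 0 ≤ a * b)
    (p q : A) (hp0 : 0 ≤ p) (hp1 : p ≤ 1) (hq0 : 0 ≤ q) (hq1 : q ≤ 1)
    (hp : p * p = p) (hq : q * q = q) (hpq : p * q = q * p) :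
    p * q ≤ p ∧ p * q ≤ q ∧
    ∀ r : A, 0 ≤ r → r ≤ 1 → r * r = r → r * p = p * r → r * q = q * r →
      r ≤ p → r ≤ q → r ≤ p * q := by
  have h1 : 0 ≤ p * (1 - q) := by
    refine hmul p (1 - q) hp0 (by simpa using hq1) ?_
    rw [mul_sub, sub_mul, mul_one, one_mul, hpq]
  have h2 : 0 ≤ (1 - p) * q := by
    refine hmul (1 - p) q (by simpa using hp1) hq0 ?_
    rw [mul_sub, sub_mul, mul_one, one_mul, hpq]
  refine ⟨?_, ?_, ?_⟩
  · rw [mul_sub, mul_one] at h1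
    exact sub_nonneg.mp h1
  · rw [sub_mul, one_mul] at h2
    exact sub_nonneg.mp h2
  · intro r hr0 hr1 hr hrp hrq hrle hqle
    have hpr0 : 0 ≤ p - r := sub_nonneg.mpr hrle
    have hqr0 : 0 ≤ q - r := sub_nonneg.mpr hqle
    have hab : (p - r) * (q - r) = (q - r) * (p - r) := by
      simp only [mul_sub, sub_mul, hpq, hrp, hrq]
      abel
    have h3 : 0 ≤ (p - r) * (q - r) := hmul _ _ hpr0 hqr0 hab
    have h4 : 0 ≤ r * (p - r) := by
      refine hmul r (p - r) hr0 hpr0 ?_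
      simp only [mul_sub, sub_mul, hrp]
    have h5 : 0 ≤ r * (q - r) := by
      refine hmul r (q - r) hr0 hqr0 ?_
      simp only [mul_sub, sub_mul, hrq]
    have key : (p - r) * (q - r) + r * (p - r) + r * (q - r) = p * q - r := by
      simp only [mul_sub, sub_mul, hr, hrp]
      abel
    have h6 : 0 ≤ p * q - r := key ▸ add_nonneg (add_nonneg h3 h4) h5
    exact sub_nonneg.mp h6
end
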